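/- Let g : ℝ → ℝ be g(θ) = (1+θ)/√(1+θ²). Fix an integer N ≥ 1, a real x, parameters u, v, u*, v* : Fin N → ℝ all taking values in [0,1], and shared central scalars c, c* ∈ [0,1]. Define F(u,v,c) = (∏_{l=1}^N g(u_l·c·v_l))·x. Then |F(u*,v*,c*) − F(u,v,c)| ≤ (√2)^(N−1) · |x| · Σ_{l=1}^N ( c*·v*_l·|u*_l − u_l| + u_l·v*_l·|c* − c| + u_l·c·|v*_l − v_l| ). -/

import Mathlib

/-!
Each layer gain `g` is bounded by `√2` in absolute value (Cauchy–Schwarz: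
`(1 + θ)² ≤ 2 (1 + θ²)`) and is `1`-Lipschitz on `[0, ∞)`, where its derivative
`(1 - θ) / (1 + θ²)^(3/2)` has modulus at most `1`. Telescoping a difference of two products
of `N` factors of modulus at most `√2` bounds it by `√2 ^ (N - 1)` times the sum of the
factorwise differences, and the change of each layer argument `u c v` splits trilinearly into
the three terms of the bound.
-/

noncomputable def g (θ : ℝ) : ℝ := (1 + θ) / Real.sqrt (1 + θ ^ 2)

lemma abs_g_le_sqrt_two (θ : ℝ) : |g θ| ≤ √2 := by
  have hs : 0 < √(1 + θ ^ 2) := Real.sqrt_pos.2 (by positivity)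
  rw [g, abs_div, abs_of_pos hs, div_le_iff₀ hs, ← Real.sqrt_mul zero_le_two]
  exact Real.abs_le_sqrt (by nlinarith [sq_nonneg (1 - θ)])

lemma hasDerivAt_g (θ : ℝ) : HasDerivAt g ((1 - θ) / √(1 + θ ^ 2) ^ 3) θ := by
  have hpos : 0 < 1 + θ ^ 2 := by positivity
  have hs : √(1 + θ ^ 2) ≠ 0 := (Real.sqrt_pos.2 hpos).ne'
  have hsq : √(1 + θ ^ 2) ^ 2 = 1 + θ ^ 2 := Real.sq_sqrt hpos.le
  have hnum : HasDerivAt (fun t : ℝ => 1 + t) 1 θ := (hasDerivAt_id θ).const_add 1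
  have hden : HasDerivAt (fun t : ℝ => √(1 + t ^ 2)) (θ / √(1 + θ ^ 2)) θ := by
    convert ((hasDerivAt_pow 2 θ).const_add 1).sqrt hpos.ne' using 1
    field_simp
    ring
  refine (hnum.div hden hs).congr_deriv ?_
  field_simp
  linear_combination hsq

lemma lipschitzOnWith_g : LipschitzOnWith 1 g (Set.Ici 0) := by
  refine (convex_Ici 0).lipschitzOnWith_of_nnnorm_hasDerivWithin_le
    (fun θ _ => (hasDerivAt_g θ).hasDerivWithinAt) fun θ (hθ : 0 ≤ θ) => ?_
  rw [← NNReal.coe_le_coe, coe_nnnorm, Real.norm_eq_abs, NNReal.coe_one]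
  have hs : 1 ≤ √(1 + θ ^ 2) := Real.one_le_sqrt.2 (by nlinarith)
  have hsq : √(1 + θ ^ 2) ^ 2 = 1 + θ ^ 2 := Real.sq_sqrt (by positivity)
  rw [abs_div, abs_of_nonneg (pow_nonneg (Real.sqrt_nonneg _) 3), div_le_one (by positivity)]
  calc |1 - θ| ≤ √(1 + θ ^ 2) ^ 2 := by rw [hsq, abs_le]; constructor <;> nlinarith
    _ ≤ √(1 + θ ^ 2) ^ 3 := pow_le_pow_right₀ hs (by norm_num)

lemma abs_prod_sub_prod_le {ι : Type*} (s : Finset ι) {f h : ι → ℝ} {M : ℝ}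
    (hf : ∀ i ∈ s, |f i| ≤ M) (hh : ∀ i ∈ s, |h i| ≤ M) :
    |∏ i ∈ s, f i - ∏ i ∈ s, h i| ≤ M ^ (s.card - 1) * ∑ i ∈ s, |f i - h i| := by
  induction s using Finset.cons_induction with
  | empty => simp
  | cons a s ha ih =>
    simp only [Finset.forall_mem_cons] at hf hh
    rw [Finset.prod_cons, Finset.prod_cons, Finset.sum_cons, Finset.card_cons, Nat.add_sub_cancel]
    obtain rfl | hs := s.eq_empty_or_nonempty
    · simp
    have hM : M * M ^ (s.card - 1) = M ^ s.card := mul_pow_sub_one (Finset.card_ne_zero.2 hs) M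
    have hprod : |∏ i ∈ s, f i| ≤ M ^ s.card := by
      rw [Finset.abs_prod, ← Finset.prod_const]
      exact Finset.prod_le_prod (fun i _ => abs_nonneg _) hf.2
    calc |f a * ∏ i ∈ s, f i - h a * ∏ i ∈ s, h i|
        = |(f a - h a) * ∏ i ∈ s, f i + h a * (∏ i ∈ s, f i - ∏ i ∈ s, h i)| := by ring_nf
      _ ≤ |f a - h a| * |∏ i ∈ s, f i| + |h a| * |∏ i ∈ s, f i - ∏ i ∈ s, h i| := by
        rw [← abs_mul, ← abs_mul]; exact abs_add_le _ _
      _ ≤ |f a - h a| * M ^ s.card + M * (M ^ (s.card - 1) * ∑ i ∈ s, |f i - h i|) := by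
        gcongr
        exacts [(abs_nonneg _).trans hh.1, hh.1, ih hf.2 hh.2]
      _ = M ^ s.card * (|f a - h a| + ∑ i ∈ s, |f i - h i|) := by rw [← mul_assoc, hM]; ring

lemma abs_mul_mul_sub_mul_mul_le {a b c a' b' c' : ℝ} (ha : 0 ≤ a) (hb : 0 ≤ b)
    (hb' : 0 ≤ b') (hc' : 0 ≤ c') :
    |a' * b' * c' - a * b * c| ≤ b' * c' * |a' - a| + a * c' * |b' - b| + a * b * |c' - c| := by
  calc |a' * b' * c' - a * b * c|
      = |(a' - a) * (b' * c') + (b' - b) * (a * c') + (c' - c) * (a * b)| := by ring_nf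
    _ ≤ |(a' - a) * (b' * c')| + |(b' - b) * (a * c')| + |(c' - c) * (a * b)| := abs_add_three _ _ _
    _ = b' * c' * |a' - a| + a * c' * |b' - b| + a * b * |c' - c| := by
      simp only [abs_mul, abs_of_nonneg (mul_nonneg hb' hc'), abs_of_nonneg (mul_nonneg ha hc'),
        abs_of_nonneg (mul_nonneg ha hb)]
      ring

theorem mpo_update_bound_general (N : ℕ) (x : ℝ)
    (u v u' v' : Fin N → ℝ) (c c' : ℝ)
    (hu : ∀ l, u l ∈ Set.Icc (0 : ℝ) 1) (hv : ∀ l, v l ∈ Set.Icc (0 : ℝ) 1)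
    (hu' : ∀ l, u' l ∈ Set.Icc (0 : ℝ) 1) (hv' : ∀ l, v' l ∈ Set.Icc (0 : ℝ) 1)
    (hc : c ∈ Set.Icc (0 : ℝ) 1) (hc' : c' ∈ Set.Icc (0 : ℝ) 1) :
    |(∏ l, g (u' l * c' * v' l)) * x - (∏ l, g (u l * c * v l)) * x| ≤
      Real.sqrt 2 ^ (N - 1) * |x| *
        ∑ l, (c' * v' l * |u' l - u l| + u l * v' l * |c' - c| + u l * c * |v' l - v l|) := by
  have hlayer : ∀ l, |g (u' l * c' * v' l) - g (u l * c * v l)| ≤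
      c' * v' l * |u' l - u l| + u l * v' l * |c' - c| + u l * c * |v' l - v l| := fun l => by
    have hθ' : 0 ≤ u' l * c' * v' l := mul_nonneg (mul_nonneg (hu' l).1 hc'.1) (hv' l).1
    have hθ : 0 ≤ u l * c * v l := mul_nonneg (mul_nonneg (hu l).1 hc.1) (hv l).1
    have hlip := lipschitzOnWith_g.norm_sub_le hθ' hθ
    rw [NNReal.coe_one, one_mul, Real.norm_eq_abs, Real.norm_eq_abs] at hlip
    exact hlip.trans (abs_mul_mul_sub_mul_mul_le (hu l).1 hc.1 hc'.1 (hv' l).1)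
  have hprod := abs_prod_sub_prod_le Finset.univ
    (fun l _ => abs_g_le_sqrt_two (u' l * c' * v' l)) (fun l _ => abs_g_le_sqrt_two (u l * c * v l))
  rw [Finset.card_univ, Fintype.card_fin] at hprod
  calc |(∏ l, g (u' l * c' * v' l)) * x - (∏ l, g (u l * c * v l)) * x|
      = |∏ l, g (u' l * c' * v' l) - ∏ l, g (u l * c * v l)| * |x| := by rw [← sub_mul, abs_mul]
    _ ≤ √2 ^ (N - 1) * |x| * ∑ l, |g (u' l * c' * v' l) - g (u l * c * v l)| := by
      rw [mul_right_comm]; gcongr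
    _ ≤ _ := by gcongr with l; exact hlayer l

theorem mpo_update_bound (N : ℕ) (hN : 1 ≤ N) (x : ℝ)
    (u v u' v' : Fin N → ℝ) (c c' : ℝ)
    (hu : ∀ l, u l ∈ Set.Icc (0 : ℝ) 1) (hv : ∀ l, v l ∈ Set.Icc (0 : ℝ) 1)
    (hu' : ∀ l, u' l ∈ Set.Icc (0 : ℝ) 1) (hv' : ∀ l, v' l ∈ Set.Icc (0 : ℝ) 1)
    (hc : c ∈ Set.Icc (0 : ℝ) 1) (hc' : c' ∈ Set.Icc (0 : ℝ) 1) :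
    |(∏ l, g (u' l * c' * v' l)) * x - (∏ l, g (u l * c * v l)) * x| ≤
      Real.sqrt 2 ^ (N - 1) * |x| *
        ∑ l, (c' * v' l * |u' l - u l| + u l * v' l * |c' - c| + u l * c * |v' l - v l|) :=
  mpo_update_bound_general N x u v u' v' c c' hu hv hu' hv' hc hc'
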